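/- arXiv:2212.10304 — 9 statements merged into one kernel-verified Lean document; each statement's English description precedes it below -/
import Mathlib

section
/- If a polyhedron P = {x ∈ ℚⁿ | Ax ≥ D} (with A a p×n rational matrix and D ∈ ℚᵖ) is nonempty and bounded, then there is no nonzero x ∈ ℚⁿ with Ax ≥ 0. Conversely, if there is no nonzero x with Ax ≥ 0, then P is bounded. -/
open Filter Topology Bornology Matrix

/-! If `x ≠ 0` and `A x ≥ 0`, then a point `y` of `P` gives the unbounded ray `y + t x`
inside `P`.

Conversely, if `P` is unbounded, so is the real polyhedron `{v ∈ ℝⁿ | A v ≥ D}`, and by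
compactness of the unit sphere the directions `x_k / ‖x_k‖` of points `x_k ∈ P` with
`‖x_k‖ → ∞` accumulate at a unit vector `u` with `A u ≥ 0`. To get a rational such vector,
write `u = R b` with `R` rational and the entries of `b` linearly independent over `ℚ`. Then
`(A u)_i = 0` forces the `i`-th row of `A R` to vanish, so replacing `b` by a rational vector
`c` close enough to it keeps `R c ≠ 0` and `A R c ≥ 0`. -/

theorem not_isBounded_of_add_mem {E : Type*} [NormedAddCommGroup E] [NormedSpace ℚ E]
    {s : Set E} {x : E} (hx : x ≠ 0) (hs : s.Nonempty) (hadd : ∀ y ∈ s, y + x ∈ s) :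
    ¬ IsBounded s := by
  obtain ⟨y, hy⟩ := hs
  have hmem : ∀ k : ℕ, y + k • x ∈ s := by
    intro k
    induction k with
    | zero => simpa using hy
    | succ k ih => simpa [succ_nsmul, add_assoc] using hadd _ ih
  intro hb
  obtain ⟨R, hR⟩ := isBounded_iff_forall_norm_le.mp hb
  obtain ⟨k, hk⟩ := exists_nat_gt ((R + ‖y‖) / ‖x‖)
  have hnorm : ‖k • x‖ = k * ‖x‖ := by
    rw [← Nat.cast_smul_eq_nsmul ℚ, norm_smul, ← Rat.norm_cast_real, Rat.cast_natCast,
      Real.norm_natCast]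
  have hle : (k : ℝ) * ‖x‖ ≤ R + ‖y‖ := calc
    (k : ℝ) * ‖x‖ = ‖(y + k • x) - y‖ := by rw [add_sub_cancel_left, hnorm]
    _ ≤ ‖y + k • x‖ + ‖y‖ := norm_sub_le _ _
    _ ≤ R + ‖y‖ := by gcongr; exact hR _ (hmem k)
  rw [div_lt_iff₀ (norm_pos_iff.mpr hx)] at hk
  linarith

theorem exists_ne_zero_forall_nonneg_of_not_isBounded {E : Type*} [NormedAddCommGroup E]
    [NormedSpace ℝ E] [FiniteDimensional ℝ E] {S : Set E} (hS : ¬ IsBounded S) :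
    ∃ u ≠ 0, ∀ f : E →ₗ[ℝ] ℝ, BddBelow (f '' S) → 0 ≤ f u := by
  simp only [isBounded_iff_forall_norm_le, not_exists, not_forall, not_le] at hS
  choose x hxS hx using fun k : ℕ => hS k
  have hx_pos : ∀ k, 0 < ‖x k‖ := fun k => (Nat.cast_nonneg k).trans_lt (hx k)
  have hx_tendsto : Tendsto (fun k => ‖x k‖) atTop atTop :=
    tendsto_atTop_mono (fun k => (hx k).le) tendsto_natCast_atTop_atTop
  have hsphere : ∀ k, ‖x k‖⁻¹ • x k ∈ Metric.sphere (0 : E) 1 := fun k => by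
    simp [norm_smul, (hx_pos k).ne']
  obtain ⟨u, hu, φ, hφ, hlim⟩ := (isCompact_sphere (0 : E) 1).tendsto_subseq hsphere
  refine ⟨u, ne_zero_of_mem_sphere one_ne_zero ⟨u, hu⟩, fun f ⟨d, hd⟩ => ?_⟩
  have hlower : ∀ k, ‖x k‖⁻¹ * d ≤ f (‖x k‖⁻¹ • x k) := fun k => by
    rw [map_smul, smul_eq_mul]
    exact mul_le_mul_of_nonneg_left (hd ⟨x k, hxS k, rfl⟩) (inv_nonneg.mpr (hx_pos k).le)
  have hlower_tendsto : Tendsto (fun k => ‖x k‖⁻¹ * d) atTop (𝓝 0) := by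
    simpa using hx_tendsto.inv_tendsto_atTop.mul_const d
  exact le_of_tendsto_of_tendsto (hlower_tendsto.comp hφ.tendsto_atTop)
    ((f.continuous_of_finiteDimensional.tendsto u).comp hlim)
    (Eventually.of_forall fun k => hlower (φ k))

theorem exists_linearIndependent_rat_mulVec_eq {κ : Type*} [Fintype κ] (u : κ → ℝ) :
    ∃ (m : ℕ) (b : Fin m → ℝ) (R : Matrix κ (Fin m) ℚ),
      LinearIndependent ℚ b ∧ R.map (↑) *ᵥ b = u := by
  set V := Submodule.span ℚ (Set.range u)
  have : FiniteDimensional ℚ V := FiniteDimensional.span_of_finite ℚ (Set.finite_range u)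
  let B := Module.finBasis ℚ V
  have hu : ∀ j, u j ∈ V := fun j => Submodule.subset_span ⟨j, rfl⟩
  refine ⟨_, fun t => B t, Matrix.of fun j t => B.repr ⟨u j, hu j⟩ t,
    B.linearIndependent.map' V.subtype V.ker_subtype, funext fun j => ?_⟩
  have h := congrArg V.subtype (B.sum_repr ⟨u j, hu j⟩)
  simp only [map_sum, map_smul, Submodule.coe_subtype, Rat.smul_def] at h
  simpa [mulVec, dotProduct] using h

theorem LinearIndependent.eq_zero_of_ratCast_dotProduct_eq_zero {μ : Type*} [Fintype μ]
    {b : μ → ℝ} (hb : LinearIndependent ℚ b) {w : μ → ℚ}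
    (h : ((↑) ∘ w) ⬝ᵥ b = 0) : w = 0 :=
  funext <| Fintype.linearIndependent_iff.mp hb w <| by simpa [dotProduct, Rat.smul_def] using h

namespace Matrix

variable {ι κ : Type*}

theorem map_ratCast_mulVec {K : Type*} [DivisionRing K] [CharZero K] [Fintype κ]
    (A : Matrix ι κ ℚ) (x : κ → ℚ) : A.map ((↑) : ℚ → K) *ᵥ ((↑) ∘ x) = (↑) ∘ (A *ᵥ x) :=
  funext fun i => (RingHom.map_mulVec (Rat.castHom K) A x i).symm

variable [Fintype ι]

theorem exists_rat_mulVec_ne_zero_and_nonneg {μ : Type*} [Fintype μ] (R : Matrix κ μ ℚ)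
    (M : Matrix ι μ ℚ) {b : μ → ℝ}
    (hRb : R.map (↑) *ᵥ b ≠ 0) (hMb : 0 ≤ M.map (↑) *ᵥ b)
    (hrow : ∀ i, (M.map (↑) *ᵥ b) i = 0 → M i = 0) :
    ∃ c : μ → ℚ, R *ᵥ c ≠ 0 ∧ 0 ≤ M *ᵥ c := by
  set U : Set (μ → ℝ) := {c | R.map (↑) *ᵥ c ≠ 0} ∩
    ⋂ i ∈ {i | 0 < (M.map (↑) *ᵥ b) i}, {c | 0 < (M.map (↑) *ᵥ c) i}
  have hU : IsOpen U := by
    refine (isOpen_ne_fun (continuous_const.matrix_mulVec continuous_id) continuous_const).inter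
      (Set.toFinite _ |>.isOpen_biInter fun i _ => isOpen_lt continuous_const ?_)
    exact (continuous_apply i).comp (continuous_const.matrix_mulVec continuous_id)
  have hdense : DenseRange fun c : μ → ℚ => ((↑) ∘ c : μ → ℝ) :=
    DenseRange.piMap fun _ => Rat.denseRange_cast
  obtain ⟨c, hcR, hcM⟩ :=
    hdense.exists_mem_open hU ⟨b, hRb, Set.mem_iInter₂.mpr fun i hi => hi⟩
  simp only [Set.mem_ofPred_eq, Set.mem_iInter₂, map_ratCast_mulVec] at hcR hcM
  refine ⟨c, fun h => hcR (by simp [h]), fun i => ?_⟩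
  rcases (hMb i).lt_or_eq with hpos | hzero
  · exact Rat.cast_nonneg.mp (hcM i hpos).le
  · simp [mulVec, hrow i hzero.symm]

variable [Fintype κ]

theorem exists_ne_zero_nonneg_mulVec_of_real (A : Matrix ι κ ℚ) {u : κ → ℝ} (hu : u ≠ 0)
    (hAu : 0 ≤ A.map (↑) *ᵥ u) : ∃ x : κ → ℚ, x ≠ 0 ∧ 0 ≤ A *ᵥ x := by
  obtain ⟨m, b, R, hb, rfl⟩ := exists_linearIndependent_rat_mulVec_eq u
  have hAR : A.map (↑) *ᵥ (R.map (↑) *ᵥ b) = (A * R).map ((↑) : ℚ → ℝ) *ᵥ b := by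
    rw [mulVec_mulVec]
    exact congrArg (· *ᵥ b) (Matrix.map_mul (f := Rat.castHom ℝ)).symm
  rw [hAR] at hAu
  obtain ⟨c, hc, hARc⟩ := exists_rat_mulVec_ne_zero_and_nonneg R (A * R) hu hAu
    fun i hi => hb.eq_zero_of_ratCast_dotProduct_eq_zero hi
  exact ⟨R *ᵥ c, hc, by rwa [mulVec_mulVec]⟩

theorem exists_ne_zero_nonneg_mulVec_of_not_isBounded (A : Matrix ι κ ℚ) (D : ι → ℚ)
    (h : ¬ IsBounded {x : κ → ℚ | ∀ i, D i ≤ (A *ᵥ x) i}) :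
    ∃ x : κ → ℚ, x ≠ 0 ∧ 0 ≤ A *ᵥ x := by
  set PR : Set (κ → ℝ) := {v | ∀ i, (D i : ℝ) ≤ (A.map (↑) *ᵥ v) i}
  have hcast : Isometry fun x : κ → ℚ => ((↑) ∘ x : κ → ℝ) :=
    Isometry.piMap _ fun _ => Isometry.of_dist_eq Rat.dist_cast
  have hPR : ¬ IsBounded PR := fun hb => h <| (hcast.antilipschitz.isBounded_preimage hb).subset
    fun x hx i => by simpa [PR, map_ratCast_mulVec] using hx i
  obtain ⟨u, hu, hAu⟩ := exists_ne_zero_forall_nonneg_of_not_isBounded hPR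
  refine A.exists_ne_zero_nonneg_mulVec_of_real hu fun i => hAu
    ((LinearMap.proj i).comp (A.map ((↑) : ℚ → ℝ)).mulVecLin) ⟨D i, ?_⟩
  rintro _ ⟨v, hv, rfl⟩
  exact hv i

end Matrix

/-- P = {x ∈ ℚⁿ | Ax ≥ D} nonempty and bounded implies there is no
nonzero x with Ax ≥ 0; conversely, if there is no nonzero x with Ax ≥ 0 then P is bounded. -/
theorem stmt_0 (p n : ℕ) (A : Matrix (Fin p) (Fin n) ℚ) (D : Fin p → ℚ)
    (P : Set (Fin n → ℚ)) (hP : P = {x : Fin n → ℚ | ∀ i, D i ≤ A.mulVec x i}) :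
    ((P.Nonempty ∧ Bornology.IsBounded P) →
      ¬ ∃ x : Fin n → ℚ, x ≠ 0 ∧ ∀ i, 0 ≤ A.mulVec x i) ∧
    ((¬ ∃ x : Fin n → ℚ, x ≠ 0 ∧ ∀ i, 0 ≤ A.mulVec x i) →
      Bornology.IsBounded P) := by
  subst hP
  refine ⟨fun ⟨hne, hb⟩ ⟨x, hx, hAx⟩ =>
      not_isBounded_of_add_mem hx hne (fun y hy i => ?_) hb,
    fun h => not_not.mp fun hb => h (A.exists_ne_zero_nonneg_mulVec_of_not_isBounded D hb)⟩
  rw [mulVec_add, Pi.add_apply]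
  linarith [hy i, hAx i]
end

section
/- The set ω_I is open inside the set D_I^{-1}(Im A_I) = {(δ,ε) ∈ ℚ² | D_I(δ,ε) lies in the image of A_I}, with respect to the topology induced from the euclidean topology on ℚ². -/
/-- The affine family of right-hand sides `D(δ,ε) = (1-δ)B + δB' + εC`. -/
def Dvec {p : ℕ} (B B' C : Fin p → ℚ) (q : ℚ × ℚ) : Fin p → ℚ :=
  fun i => (1 - q.1) * B i + q.1 * B' i + q.2 * C i

/-- `Ω_I`: parameters `(δ,ε)` such that the face `F_I` of the polyhedron is nonempty. -/
def bigOmega {p n : ℕ} (A : Matrix (Fin p) (Fin n) ℚ) (B B' C : Fin p → ℚ)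
    (I : Set (Fin p)) : Set (ℚ × ℚ) :=
  {q | ∃ x : Fin n → ℚ, (∀ i ∈ I, A.mulVec x i = Dvec B B' C q i) ∧
        ∀ i, Dvec B B' C q i ≤ A.mulVec x i}

/-- `ω_I`: parameters `(δ,ε)` with a point satisfying the equalities indexed by `I`
and strict inequalities elsewhere. -/
def smallOmega {p n : ℕ} (A : Matrix (Fin p) (Fin n) ℚ) (B B' C : Fin p → ℚ)
    (I : Set (Fin p)) : Set (ℚ × ℚ) :=
  {q | ∃ x : Fin n → ℚ, (∀ i ∈ I, A.mulVec x i = Dvec B B' C q i) ∧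
        ∀ j ∉ I, Dvec B B' C q j < A.mulVec x j}

/-- `ω_I` is open inside `D_I⁻¹(Im A_I)`, the set of parameters `(δ,ε)`
such that `D_I(δ,ε)` lies in the image of `A_I`, for the topology induced from ℚ². -/
theorem stmt_4 (p n : ℕ) (A : Matrix (Fin p) (Fin n) ℚ) (B B' C : Fin p → ℚ)
    (I : Set (Fin p))
    (S : Set (ℚ × ℚ))
    (hS : S = {q | ∃ x : Fin n → ℚ, ∀ i ∈ I, A.mulVec x i = Dvec B B' C q i}) :
    IsOpen {q : {q : ℚ × ℚ // q ∈ S} | (q : ℚ × ℚ) ∈ smallOmega A B B' C I} := by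
  classical
  -- the linear map `A_I`
  set T : (Fin n → ℚ) →ₗ[ℚ] (I → ℚ) :=
    (LinearMap.funLeft ℚ ℚ (Subtype.val : I → Fin p)).comp A.mulVecLin with hTdef
  have hTval : ∀ x (i : I), T x i = A.mulVec x (i : Fin p) := fun x i => rfl
  -- membership in S
  have hmem : ∀ q : ℚ × ℚ, q ∈ S ↔ (fun i : I => Dvec B B' C q i) ∈ LinearMap.range T := by
    intro q
    rw [hS]
    constructor
    · rintro ⟨x, hx⟩
      exact ⟨x, funext fun i => hx i i.2⟩
    · rintro ⟨x, hx⟩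
      exact ⟨x, fun i hi => congrFun hx ⟨i, hi⟩⟩
  -- right inverse of T on its range
  obtain ⟨σ, hσ⟩ := T.rangeRestrict.exists_rightInverse_of_surjective
      (LinearMap.range_rangeRestrict T)
  have hσ' : ∀ w : LinearMap.range T, T (σ w) = (w : I → ℚ) := by
    intro w
    have := LinearMap.congr_fun hσ w
    exact congrArg Subtype.val this
  -- the linear part of D_I
  set L : (ℚ × ℚ) →ₗ[ℚ] (I → ℚ) :=
    { toFun := fun q (i : I) => q.1 * (B' i - B i) + q.2 * C i
      map_add' := by intro a b; funext i; simp; ring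
      map_smul' := by intro c a; funext i; simp; ring } with hLdef
  have hDL : ∀ q : ℚ × ℚ, (fun i : I => Dvec B B' C q i) = (fun i : I => B i) + L q := by
    intro q; funext i; simp [Dvec, hLdef]; ring
  set G : Submodule ℚ (ℚ × ℚ) := Submodule.comap L (LinearMap.range T) with hGdef
  -- per-row linear functionals on G measuring the correction, extended to ℚ²
  have hFex : ∀ j : Fin p, ∃ F : (ℚ × ℚ) →ₗ[ℚ] ℚ,
      F.comp G.subtype = ((LinearMap.proj j).comp
        (A.mulVecLin.comp (σ.comp ((L.comp G.subtype).codRestrict (LinearMap.range T)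
          (fun g => g.2))))) := fun j => LinearMap.exists_extend _
  choose F hF using hFex
  have hFval : ∀ (j : Fin p) (g : G),
      F j (g : ℚ × ℚ) = A.mulVec (σ ⟨L (g : ℚ × ℚ), g.2⟩) j := by
    intro j g
    exact LinearMap.congr_fun (hF j) g
  rw [isOpen_iff_forall_mem_open]
  rintro ⟨q₀, hq₀S⟩ hq₀
  obtain ⟨x₀, hx₀I, hx₀lt⟩ := hq₀
  refine ⟨Subtype.val ⁻¹' {q : ℚ × ℚ | ∀ j, j ∉ I →
      Dvec B B' C q j < A.mulVec x₀ j + F j (q - q₀)}, ?_, ?_, ?_⟩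
  · -- contained in the goal set
    rintro ⟨q, hqS⟩ hq
    have hqmem : (fun i : I => Dvec B B' C q i) ∈ LinearMap.range T := (hmem q).1 hqS
    have hq₀mem : (fun i : I => Dvec B B' C q₀ i) ∈ LinearMap.range T := (hmem q₀).1 hq₀S
    have hgG : q - q₀ ∈ G := by
      have : L (q - q₀) = (fun i : I => Dvec B B' C q i) - (fun i : I => Dvec B B' C q₀ i) := by
        rw [hDL q, hDL q₀, map_sub]; abel
      rw [hGdef, Submodule.mem_comap, this]
      exact Submodule.sub_mem _ hqmem hq₀mem
    set g : G := ⟨q - q₀, hgG⟩ with hgdef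
    set x : Fin n → ℚ := x₀ + σ ⟨L (q - q₀), hgG⟩ with hxdef
    refine ⟨x, ?_, ?_⟩
    · intro i hi
      have h1 : T x = T x₀ + L (q - q₀) := by
        rw [hxdef, map_add, hσ' ⟨L (q - q₀), hgG⟩]
      have h2 : T x₀ = fun i : I => Dvec B B' C q₀ i := by
        funext i; rw [hTval]; exact (hx₀I i i.2).symm ▸ hx₀I i i.2
      have h4 : T x = fun i : I => Dvec B B' C q i := by
        rw [h1, h2, hDL q, hDL q₀, map_sub]; abel
      exact congrFun h4 ⟨i, hi⟩
    · intro j hj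
      have hlt := hq j hj
      have : A.mulVec x j = A.mulVec x₀ j + F j (q - q₀) := by
        rw [hxdef, Matrix.mulVec_add, Pi.add_apply]
        congr 1
        exact (hFval j g).symm
      rw [this]; exact hlt
  · -- openness
    apply IsOpen.preimage continuous_subtype_val
    have : {q : ℚ × ℚ | ∀ j, j ∉ I →
        Dvec B B' C q j < A.mulVec x₀ j + F j (q - q₀)} =
        ⋂ j : Fin p, {q : ℚ × ℚ | j ∉ I → Dvec B B' C q j < A.mulVec x₀ j + F j (q - q₀)} := by
      ext q; simp
    rw [this]
    apply isOpen_iInter_of_finite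
    intro j
    by_cases hj : j ∈ I
    · have : {q : ℚ × ℚ | j ∉ I → Dvec B B' C q j < A.mulVec x₀ j + F j (q - q₀)} = Set.univ := by
        ext q; simp [hj]
      rw [this]; exact isOpen_univ
    · have : {q : ℚ × ℚ | j ∉ I → Dvec B B' C q j < A.mulVec x₀ j + F j (q - q₀)} =
          {q : ℚ × ℚ | Dvec B B' C q j < A.mulVec x₀ j + F j (q - q₀)} := by
        ext q; simp [hj]
      rw [this]
      have hFform : ∀ q : ℚ × ℚ, F j q = q.1 * F j (1, 0) + q.2 * F j (0, 1) := by
        intro q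
        have : q = q.1 • ((1 : ℚ), (0 : ℚ)) + q.2 • ((0 : ℚ), (1 : ℚ)) := by
          ext <;> simp
        conv_lhs => rw [this]
        rw [map_add, map_smul, map_smul]; simp [smul_eq_mul]
      apply isOpen_lt (f := fun q : ℚ × ℚ => Dvec B B' C q j)
        (g := fun q : ℚ × ℚ => A.mulVec x₀ j + F j (q - q₀))
      · unfold Dvec; fun_prop
      · have : (fun q : ℚ × ℚ => A.mulVec x₀ j + F j (q - q₀)) =
            (fun q : ℚ × ℚ => A.mulVec x₀ j + ((q.1 - q₀.1) * F j (1,0) + (q.2 - q₀.2) * F j (0,1))) := by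
          funext q; rw [hFform (q - q₀)]; rfl
        rw [this]; fun_prop
  · -- q₀ is in it
    intro j hj
    simp only [sub_self, map_zero, add_zero]
    exact hx₀lt j hj
end

section
/- If ω_I is nonempty, then ω_I ⊆ Ω_I ⊆ closure(ω_I); more precisely, for any point p₁ ∈ ω_I and p₂ ∈ Ω_I, the half-open segment {(1−t)p₁ + t p₂ | t ∈ [0,1)} is contained in ω_I. -/
/-- If `ω_I` is nonempty then `ω_I ⊆ Ω_I ⊆ closure ω_I`; moreover for any
`p₁ ∈ ω_I`, `p₂ ∈ Ω_I` the half-open segment `{(1-t)p₁ + tp₂ | t ∈ [0,1)}` lies in `ω_I`. -/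
theorem stmt_5 (p n : ℕ) (A : Matrix (Fin p) (Fin n) ℚ) (B B' C : Fin p → ℚ)
    (I : Set (Fin p)) (hne : (smallOmega A B B' C I).Nonempty) :
    smallOmega A B B' C I ⊆ bigOmega A B B' C I ∧
    bigOmega A B B' C I ⊆ closure (smallOmega A B B' C I) ∧
    ∀ p₁ ∈ smallOmega A B B' C I, ∀ p₂ ∈ bigOmega A B B' C I,
      ∀ t : ℚ, 0 ≤ t → t < 1 → (1 - t) • p₁ + t • p₂ ∈ smallOmega A B B' C I := by
  obtain ⟨q₀, hq₀⟩ := hne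
  have seg : ∀ p₁ ∈ smallOmega A B B' C I, ∀ p₂ ∈ bigOmega A B B' C I,
      ∀ t : ℚ, 0 ≤ t → t < 1 → (1 - t) • p₁ + t • p₂ ∈ smallOmega A B B' C I := by
    rintro p₁ ⟨x₁, he₁, hs₁⟩ p₂ ⟨x₂, he₂, hs₂⟩ t ht0 ht1
    have hD : ∀ i, Dvec B B' C ((1 - t) • p₁ + t • p₂) i
        = (1 - t) * Dvec B B' C p₁ i + t * Dvec B B' C p₂ i := by
      intro i
      simp only [Dvec, Prod.fst_add, Prod.snd_add, Prod.smul_fst, Prod.smul_snd, smul_eq_mul]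
      ring
    have hM : ∀ i, A.mulVec ((1 - t) • x₁ + t • x₂) i
        = (1 - t) * A.mulVec x₁ i + t * A.mulVec x₂ i := by
      intro i
      simp [Matrix.mulVec_add, Matrix.mulVec_smul]
    refine ⟨(1 - t) • x₁ + t • x₂, ?_, ?_⟩
    · intro i hi
      rw [hM i, hD i, he₁ i hi, he₂ i hi]
    · intro j hj
      rw [hM j, hD j]
      have h1 : (1 - t) * Dvec B B' C p₁ j < (1 - t) * A.mulVec x₁ j :=
        mul_lt_mul_of_pos_left (hs₁ j hj) (by linarith)
      have h2 : t * Dvec B B' C p₂ j ≤ t * A.mulVec x₂ j :=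
        mul_le_mul_of_nonneg_left (hs₂ j) ht0
      linarith
  have sub1 : smallOmega A B B' C I ⊆ bigOmega A B B' C I := by
    rintro q ⟨x, he, hs⟩
    refine ⟨x, he, fun i => ?_⟩
    by_cases hi : i ∈ I
    · exact (he i hi).ge
    · exact (hs i hi).le
  refine ⟨sub1, ?_, seg⟩
  intro q hq
  rw [Metric.mem_closure_iff]
  intro ε hε
  set d := dist q q₀ with hd
  have hd0 : (0:ℝ) ≤ d := dist_nonneg
  obtain ⟨δ, hδ0, hδlt⟩ := exists_rat_btwn
    (show (0:ℝ) < min 1 (ε / (d + 1)) from lt_min one_pos (div_pos hε (by linarith)))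
  have hδpos : (0:ℚ) < δ := by exact_mod_cast hδ0
  have hδ1 : δ < 1 := by exact_mod_cast lt_of_lt_of_le hδlt (min_le_left _ _)
  refine ⟨(1 - (1 - δ)) • q₀ + (1 - δ) • q,
    seg q₀ hq₀ q hq (1 - δ) (by linarith) (by linarith), ?_⟩
  set b : ℚ × ℚ := (1 - (1 - δ)) • q₀ + (1 - δ) • q with hb
  have habs : |(δ:ℝ)| = (δ:ℝ) := abs_of_pos (by exact_mod_cast hδpos)
  have h1 : dist q.1 b.1 = (δ:ℝ) * dist q.1 q₀.1 := by
    have hq1 : q.1 - b.1 = δ * (q.1 - q₀.1) := by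
      simp only [hb, Prod.fst_add, Prod.smul_fst, smul_eq_mul]
      ring
    have hc := congrArg (fun r : ℚ => (r : ℝ)) hq1
    push_cast at hc
    rw [Rat.dist_eq, Rat.dist_eq, hc, abs_mul, habs]
  have h2 : dist q.2 b.2 = (δ:ℝ) * dist q.2 q₀.2 := by
    have hq2 : q.2 - b.2 = δ * (q.2 - q₀.2) := by
      simp only [hb, Prod.snd_add, Prod.smul_snd, smul_eq_mul]
      ring
    have hc := congrArg (fun r : ℚ => (r : ℝ)) hq2
    push_cast at hc
    rw [Rat.dist_eq, Rat.dist_eq, hc, abs_mul, habs]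
  have hle : dist q b ≤ (δ:ℝ) * d := by
    rw [Prod.dist_eq, h1, h2]
    have e1 : dist q.1 q₀.1 ≤ d := by rw [hd, Prod.dist_eq]; exact le_max_left _ _
    have e2 : dist q.2 q₀.2 ≤ d := by rw [hd, Prod.dist_eq]; exact le_max_right _ _
    have hδR : (0:ℝ) ≤ (δ:ℝ) := by positivity
    exact max_le (mul_le_mul_of_nonneg_left e1 hδR) (mul_le_mul_of_nonneg_left e2 hδR)
  have hlt : (δ:ℝ) * d < ε := by
    have hδle : (δ:ℝ) ≤ ε / (d + 1) := (le_of_lt (lt_of_lt_of_le hδlt (min_le_right _ _)))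
    have h3 : (δ:ℝ) * d ≤ ε / (d + 1) * d := mul_le_mul_of_nonneg_right hδle hd0
    have h4 : ε / (d + 1) * d < ε / (d + 1) * (d + 1) :=
      mul_lt_mul_of_pos_left (by linarith) (div_pos hε (by linarith))
    have h5 : ε / (d + 1) * (d + 1) = ε := div_mul_cancel₀ _ (by linarith)
    linarith
  exact lt_of_le_of_lt hle hlt
end

section
/- Suppose A satisfies: no nonzero x has Ax ≥ 0 (boundedness condition), working over ℝ. Then for every I ⊆ {1,…,p}, the set Ω_I(ℝ) = {(δ,ε) ∈ ℝ² | ∃ x ∈ ℝⁿ, A_I x = D_I(δ,ε), Ax ≥ D(δ,ε)} is closed in ℝ². -/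
/-- The real version of the family `D(δ,ε) = (1-δ)B + δB' + εC`. -/
def DvecR {p : ℕ} (B B' C : Fin p → ℚ) (q : ℝ × ℝ) : Fin p → ℝ :=
  fun i => (1 - q.1) * (B i : ℝ) + q.1 * (B' i : ℝ) + q.2 * (C i : ℝ)

/-!
The condition on `A` says that the recession cone `{x | 0 ≤ A x}` of every polyhedron
`{x | c ≤ A x}` is trivial, so these polyhedra are bounded: a sequence escaping to infinity,
normalised to the unit sphere, would accumulate at a nonzero point of the cone. Hence if
`q_k → q` with witnesses `x_k`, the lower bounds `D(q_k)` are uniformly bounded below, the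
`x_k` stay in a compact set, and a limit point of the `x_k` is a witness for `q`.
-/

open Filter Topology Bornology Metric

variable {E ι : Type*} [NormedAddCommGroup E] [NormedSpace ℝ E]

theorem ContinuousLinearMap.nonneg_of_tendsto_inv_norm_smul {α : Type*} {l : Filter α}
    [l.NeBot] (f : E →L[ℝ] ι → ℝ) {c : ι → ℝ} {x : α → E} {z : E}
    (hc : ∀ k, c ≤ f (x k)) (hnorm : Tendsto (‖x ·‖) l atTop)
    (hz : Tendsto (fun k => ‖x k‖⁻¹ • x k) l (𝓝 z)) : 0 ≤ f z := by
  have hlower : Tendsto (fun k => ‖x k‖⁻¹ • c) l (𝓝 0) := by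
    simpa using (tendsto_inv_atTop_zero.comp hnorm).smul_const c
  refine le_of_tendsto_of_tendsto' hlower ((f.continuous.tendsto z).comp hz) fun k => ?_
  simpa only [Function.comp_apply, map_smul] using
    smul_le_smul_of_nonneg_left (hc k) (inv_nonneg.2 (norm_nonneg (x k)))

theorem ContinuousLinearMap.isBounded_setOf_le [ProperSpace E] (f : E →L[ℝ] ι → ℝ)
    (hf : ∀ x, 0 ≤ f x → x = 0) (c : ι → ℝ) : IsBounded {x | c ≤ f x} := by
  by_contra hunb
  simp only [isBounded_iff_forall_norm_le, not_exists, not_forall, not_le] at hunb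
  choose x hxc hxk using fun k : ℕ => hunb k
  have hx0 : ∀ k, x k ≠ 0 := fun k => norm_pos_iff.1 ((Nat.cast_nonneg k).trans_lt (hxk k))
  obtain ⟨z, hz, φ, hφ, hlim⟩ := (isCompact_sphere (0 : E) 1).tendsto_subseq
    (x := fun k => ‖x k‖⁻¹ • x k) fun k => by
      simpa using norm_smul_inv_norm (𝕜 := ℝ) (hx0 k)
  have hnorm : Tendsto (‖x ·‖) atTop atTop :=
    tendsto_atTop_mono (fun k => (hxk k).le) tendsto_natCast_atTop_atTop
  have hz0 := hf z (f.nonneg_of_tendsto_inv_norm_smul (fun k => hxc (φ k))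
    (hnorm.comp hφ.tendsto_atTop) hlim)
  simp [hz0] at hz

theorem ContinuousLinearMap.isClosed_setOf_exists_eqOn_and_le [ProperSpace E] [Finite ι]
    {X : Type*} [TopologicalSpace X] [SequentialSpace X] (f : E →L[ℝ] ι → ℝ)
    (hf : ∀ x, 0 ≤ f x → x = 0) {D : X → ι → ℝ} (hD : Continuous D) (I : Set ι) :
    IsClosed {q | ∃ x, Set.EqOn (f x) (D q) I ∧ D q ≤ f x} := by
  have hS : IsClosed {p : X × E | Set.EqOn (f p.2) (D p.1) I ∧ D p.1 ≤ f p.2} := by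
    simp only [← Set.domRestrict_eq_domRestrict_iff]
    exact (isClosed_eq (by fun_prop) (by fun_prop)).inter <|
      isClosed_le (hD.comp continuous_fst) (f.continuous.comp continuous_snd)
  refine IsSeqClosed.isClosed fun q l hq hql => ?_
  choose x hx using hq
  have hDl : Tendsto (D ∘ q) atTop (𝓝 (D l)) := (hD.tendsto l).comp hql
  obtain ⟨c, hc⟩ := hDl.bddBelow_range
  obtain ⟨z, -, φ, hφ, hxz⟩ := tendsto_subseq_of_bounded (f.isBounded_setOf_le hf c)
    fun k => (hc ⟨k, rfl⟩).trans (hx k).2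
  exact ⟨z, hS.mem_of_tendsto ((hql.comp hφ.tendsto_atTop).prodMk_nhds hxz)
    (Eventually.of_forall fun k => hx (φ k))⟩

/-- If no nonzero real vector `x` satisfies `Ax ≥ 0`, then for every
`I ⊆ {1,…,p}` the set `Ω_I(ℝ)` is closed in ℝ². -/
theorem stmt_6 (p n : ℕ) (A : Matrix (Fin p) (Fin n) ℚ) (B B' C : Fin p → ℚ)
    (hbdd : ¬ ∃ x : Fin n → ℝ, x ≠ 0 ∧
      ∀ i, 0 ≤ (A.map ((↑) : ℚ → ℝ)).mulVec x i)
    (I : Set (Fin p)) :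
    IsClosed {q : ℝ × ℝ | ∃ x : Fin n → ℝ,
      (∀ i ∈ I, (A.map ((↑) : ℚ → ℝ)).mulVec x i = DvecR B B' C q i) ∧
      ∀ i, DvecR B B' C q i ≤ (A.map ((↑) : ℚ → ℝ)).mulVec x i} :=
  (A.map ((↑) : ℚ → ℝ)).mulVecLin.toContinuousLinearMap.isClosed_setOf_exists_eqOn_and_le
    (fun x hx => not_not.1 fun hx0 => hbdd ⟨x, hx0, hx⟩) (by unfold DvecR; fun_prop) I
end

section
/- Let J ⊆ I ⊆ {1,…,p} with ω_I nonempty. If the images of A_I and A_J (as linear maps ℚⁿ → ℚ^{|I|} resp. ℚ^{|J|}) have the same codimension, then ω_J is nonempty. -/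
/-- The submatrix of `A` given by the rows indexed by the finite set `I`,
viewed as a linear map `ℚⁿ → ℚ^I` via `mulVec`. -/
def rowsub {p n : ℕ} (A : Matrix (Fin p) (Fin n) ℚ) (I : Finset (Fin p)) :
    Matrix {i // i ∈ I} (Fin n) ℚ :=
  A.submatrix (fun i => (i : Fin p)) id

open Filter Topology Module Matrix

/-- `π` induces a surjection `W ⧸ R → U ⧸ π R`; equal dimensions make it injective. -/
theorem LinearMap.ker_le_of_finrank_quotient_eq {K W U : Type*} [Field K] [AddCommGroup W]
    [Module K W] [AddCommGroup U] [Module K U] [FiniteDimensional K W] [FiniteDimensional K U]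
    (π : W →ₗ[K] U) (hπ : Function.Surjective π) (R : Submodule K W)
    (h : finrank K (W ⧸ R) = finrank K (U ⧸ R.map π)) : LinearMap.ker π ≤ R := by
  set π' := R.mapQ (R.map π) π (Submodule.le_comap_map π R)
  have hsurj : Function.Surjective π' := by
    rw [← LinearMap.range_eq_top, Submodule.range_mapQ, LinearMap.range_eq_top.2 hπ,
      Submodule.map_top, Submodule.range_mkQ]
  have hinj : Function.Injective π' :=
    (LinearMap.injective_iff_surjective_of_finrank_eq_finrank h).2 hsurj
  intro w hw
  rw [← Submodule.Quotient.mk_eq_zero]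
  apply hinj
  rw [Submodule.mapQ_apply, LinearMap.mem_ker.1 hw, map_zero, Submodule.Quotient.mk_zero]

section Perturbation

variable {𝕜 m n : Type*} [Field 𝕜] [LinearOrder 𝕜] [IsStrictOrderedRing 𝕜] [TopologicalSpace 𝕜]
  [OrderTopology 𝕜] [Finite m] [Fintype n]

theorem exists_mulVec_eq_on_lt_off_of_subset (A : Matrix m n 𝕜) (d : m → 𝕜) {I J : Set m}
    (hJI : J ⊆ I) {x : n → 𝕜} (hxI : ∀ i ∈ I, (A *ᵥ x) i = d i)
    (hxI' : ∀ j ∉ I, d j < (A *ᵥ x) j) {y : n → 𝕜} (hyJ : ∀ j ∈ J, (A *ᵥ y) j = 0)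
    (hyIJ : ∀ i ∈ I \ J, 0 < (A *ᵥ y) i) :
    ∃ x' : n → 𝕜, (∀ i ∈ J, (A *ᵥ x') i = d i) ∧ ∀ j ∉ J, d j < (A *ᵥ x') j := by
  have hmv (t : 𝕜) (j : m) : (A *ᵥ (x + t • y)) j = (A *ᵥ x) j + t * (A *ᵥ y) j := by
    simp only [mulVec_add, mulVec_smul, Pi.add_apply, Pi.smul_apply, smul_eq_mul]
  have hnear : ∀ᶠ t in 𝓝 (0 : 𝕜), ∀ j ∉ I, d j < (A *ᵥ (x + t • y)) j := by
    refine eventually_all.2 fun j => ?_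
    by_cases hj : j ∈ I
    · exact Eventually.of_forall fun _ h => absurd hj h
    have hcont : Tendsto (fun t => (A *ᵥ x) j + t * (A *ᵥ y) j) (𝓝 0) (𝓝 ((A *ᵥ x) j)) := by
      simpa using ((continuous_mul_const ((A *ᵥ y) j)).const_add ((A *ᵥ x) j)).tendsto 0
    filter_upwards [hcont.eventually (lt_mem_nhds (hxI' j hj))] with t ht _
    rwa [hmv]
  obtain ⟨t, ht, htpos⟩ :=
    ((hnear.filter_mono nhdsWithin_le_nhds).and (self_mem_nhdsWithin (s := Set.Ioi 0))).exists
  refine ⟨x + t • y, fun i hi => ?_, fun j hj => ?_⟩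
  · rw [hmv, hyJ i hi, mul_zero, add_zero, hxI i (hJI hi)]
  · by_cases hjI : j ∈ I
    · rw [hmv, hxI j hjI]
      exact lt_add_of_pos_right _ (mul_pos htpos (hyIJ j ⟨hjI, hj⟩))
    · exact ht j hjI

end Perturbation

section Rows

variable {p n : ℕ} (A : Matrix (Fin p) (Fin n) ℚ) {I J : Finset (Fin p)}

theorem rowsub_mulVec_apply (I : Finset (Fin p)) (x : Fin n → ℚ) (i : {i // i ∈ I}) :
    (rowsub A I *ᵥ x) i = (A *ᵥ x) i :=
  rfl

def restrictRows (hJI : J ⊆ I) : ({i // i ∈ I} → ℚ) →ₗ[ℚ] ({j // j ∈ J} → ℚ) :=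
  LinearMap.funLeft ℚ ℚ fun j => ⟨j, hJI j.2⟩

theorem restrictRows_surjective (hJI : J ⊆ I) : Function.Surjective (restrictRows hJI) :=
  LinearMap.funLeft_surjective_of_injective ℚ ℚ _ fun _ _ h => Subtype.ext (Subtype.mk.inj h)

theorem restrictRows_comp_mulVecLin (hJI : J ⊆ I) :
    restrictRows hJI ∘ₗ (rowsub A I).mulVecLin = (rowsub A J).mulVecLin :=
  rfl

theorem finrank_quotient_range_rowsub (I : Finset (Fin p)) :
    finrank ℚ (({i // i ∈ I} → ℚ) ⧸ LinearMap.range (rowsub A I).mulVecLin) =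
      I.card - (rowsub A I).rank := by
  rw [Submodule.finrank_quotient, finrank_fintype_fun_eq_card, Fintype.card_coe]
  rfl

theorem exists_mulVec_eq_zero_on_eq_one_on_sdiff (hJI : J ⊆ I)
    (hcodim : I.card - (rowsub A I).rank = J.card - (rowsub A J).rank) :
    ∃ y : Fin n → ℚ, (∀ j ∈ J, (A *ᵥ y) j = 0) ∧ ∀ i ∈ I \ J, (A *ᵥ y) i = 1 := by
  have hker : LinearMap.ker (restrictRows hJI) ≤ LinearMap.range (rowsub A I).mulVecLin := by
    refine LinearMap.ker_le_of_finrank_quotient_eq _ (restrictRows_surjective hJI) _ ?_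
    rw [← LinearMap.range_comp, restrictRows_comp_mulVecLin, finrank_quotient_range_rowsub,
      finrank_quotient_range_rowsub, hcodim]
  set w : {i // i ∈ I} → ℚ := fun i => if (i : Fin p) ∈ J then 0 else 1
  have hw : w ∈ LinearMap.ker (restrictRows hJI) := by
    ext j
    simp [w, restrictRows, j.2]
  obtain ⟨y, hy⟩ := hker hw
  refine ⟨y, fun j hj => ?_, fun i hi => ?_⟩
  · simpa [w, hj, rowsub_mulVec_apply] using congrFun hy ⟨j, hJI hj⟩
  · rw [Finset.mem_sdiff] at hi
    simpa [w, hi.2, rowsub_mulVec_apply] using congrFun hy ⟨i, hi.1⟩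

end Rows

/-- If `J ⊆ I`, `ω_I` is nonempty and the images of `A_I` and `A_J` have the
same codimension, then `ω_J` is nonempty. -/
theorem stmt_8 (p n : ℕ) (A : Matrix (Fin p) (Fin n) ℚ) (B B' C : Fin p → ℚ)
    (I J : Finset (Fin p)) (hJI : J ⊆ I)
    (hne : (smallOmega A B B' C (I : Set (Fin p))).Nonempty)
    (hcodim : I.card - (rowsub A I).rank = J.card - (rowsub A J).rank) :
    (smallOmega A B B' C (J : Set (Fin p))).Nonempty := by
  obtain ⟨q, x, hxI, hxI'⟩ := hne
  obtain ⟨y, hyJ, hyIJ⟩ := exists_mulVec_eq_zero_on_eq_one_on_sdiff A hJI hcodim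
  refine ⟨q, exists_mulVec_eq_on_lt_off_of_subset A _ (Finset.coe_subset.2 hJI) hxI hxI' hyJ ?_⟩
  intro i hi
  rw [hyIJ i (by simpa using hi)]
  exact one_pos
end

section
/- Let I, J ⊆ {1,…,p} be such that ω_I and ω_J are nonempty. Then ω_{I∩J} is nonempty; moreover, for any (δ₁,ε₁) ∈ ω_I and (δ₂,ε₂) ∈ ω_J and any t ∈ (0,1), the point (1−t)(δ₁,ε₁) + t(δ₂,ε₂) lies in ω_{I∩J}. -/
lemma Dvec_affine {p : ℕ} (B B' C : Fin p → ℚ) (q₁ q₂ : ℚ × ℚ) (t : ℚ) (i : Fin p) :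
    Dvec B B' C ((1 - t) • q₁ + t • q₂) i
      = (1 - t) * Dvec B B' C q₁ i + t * Dvec B B' C q₂ i := by
  simp only [Dvec, Prod.fst_add, Prod.snd_add, Prod.smul_fst, Prod.smul_snd, smul_eq_mul]
  ring

lemma mulVec_affine {p n : ℕ} (A : Matrix (Fin p) (Fin n) ℚ) (x₁ x₂ : Fin n → ℚ)
    (t : ℚ) (i : Fin p) :
    A.mulVec ((1 - t) • x₁ + t • x₂) i
      = (1 - t) * A.mulVec x₁ i + t * A.mulVec x₂ i := by
  simp [Matrix.mulVec_add, Matrix.mulVec_smul]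

lemma stmt9_aux {p n : ℕ} (A : Matrix (Fin p) (Fin n) ℚ) (B B' C : Fin p → ℚ)
    (I J : Set (Fin p)) :
    ∀ q₁ ∈ smallOmega A B B' C I, ∀ q₂ ∈ smallOmega A B B' C J,
      ∀ t : ℚ, 0 < t → t < 1 → (1 - t) • q₁ + t • q₂ ∈ smallOmega A B B' C (I ∩ J) := by
  rintro q₁ ⟨x₁, he₁, hs₁⟩ q₂ ⟨x₂, he₂, hs₂⟩ t ht0 ht1
  have h1t : 0 < 1 - t := by linarith
  refine ⟨(1 - t) • x₁ + t • x₂, ?_, ?_⟩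
  · rintro i ⟨hiI, hiJ⟩
    rw [mulVec_affine, Dvec_affine, he₁ i hiI, he₂ i hiJ]
  · intro j hj
    rw [mulVec_affine, Dvec_affine]
    have h₁ : Dvec B B' C q₁ j ≤ A.mulVec x₁ j := by
      by_cases hjI : j ∈ I
      · exact (he₁ j hjI).ge
      · exact (hs₁ j hjI).le
    have h₂ : Dvec B B' C q₂ j ≤ A.mulVec x₂ j := by
      by_cases hjJ : j ∈ J
      · exact (he₂ j hjJ).ge
      · exact (hs₂ j hjJ).le
    rcases (not_and_or.mp hj : j ∉ I ∨ j ∉ J) with h | h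
    · have := hs₁ j h; nlinarith
    · have := hs₂ j h; nlinarith

/-- If `ω_I` and `ω_J` are nonempty then `ω_{I∩J}` is nonempty; moreover it
contains every strict convex combination of a point of `ω_I` and a point of `ω_J`. -/
theorem stmt_9 (p n : ℕ) (A : Matrix (Fin p) (Fin n) ℚ) (B B' C : Fin p → ℚ)
    (I J : Set (Fin p))
    (hI : (smallOmega A B B' C I).Nonempty) (hJ : (smallOmega A B B' C J).Nonempty) :
    (smallOmega A B B' C (I ∩ J)).Nonempty ∧
    ∀ q₁ ∈ smallOmega A B B' C I, ∀ q₂ ∈ smallOmega A B B' C J,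
      ∀ t : ℚ, 0 < t → t < 1 → (1 - t) • q₁ + t • q₂ ∈ smallOmega A B B' C (I ∩ J) := by
  obtain ⟨q₁, hq₁⟩ := hI
  obtain ⟨q₂, hq₂⟩ := hJ
  exact ⟨⟨_, stmt9_aux A B B' C I J q₁ hq₁ q₂ hq₂ (1/2) (by norm_num) (by norm_num)⟩,
    stmt9_aux A B B' C I J⟩
end

section
/- Let I ⊆ I₁ ⊆ {1,…,p} be such that Im A_I and Im A_{I₁} both have codimension 1 and are cut out by the same linear relation Σ_{i∈I} λ_i X_i = 0 with λ_i ≠ 0 exactly for i ∈ I. Then for every j ∈ I, the matrix A_{I₁∖{j}} is surjective. -/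
/-- If `I ⊆ I₁`, the images of `A_I` and `A_{I₁}` both have codimension 1
and are cut out by the same relation `∑_{i∈I} λ_i X_i = 0` with `λ_i ≠ 0` exactly for
`i ∈ I`, then for every `j ∈ I` the matrix `A_{I₁∖{j}}` is surjective. -/
theorem stmt_11 (p n : ℕ) (A : Matrix (Fin p) (Fin n) ℚ) (I I₁ : Finset (Fin p))
    (hII : I ⊆ I₁) (lam : Fin p → ℚ)
    (hsupp : ∀ i : Fin p, lam i ≠ 0 ↔ i ∈ I)
    (hI : Set.range (rowsub A I).mulVec =
      {y : {i // i ∈ I} → ℚ | ∑ i : {i // i ∈ I}, lam i * y i = 0})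
    (hI₁ : Set.range (rowsub A I₁).mulVec =
      {y : {i // i ∈ I₁} → ℚ | ∑ i : {i // i ∈ I₁}, lam i * y i = 0}) :
    ∀ j ∈ I, Function.Surjective (rowsub A (I₁.erase j)).mulVec := by
  intro j hj y
  have hjI₁ : j ∈ I₁ := hII hj
  have hlj : lam j ≠ 0 := (hsupp j).mpr hj
  -- the sum over the erased set
  set S : ℚ := ∑ i : {i // i ∈ I₁.erase j}, lam i * y i with hS
  -- extend y to I₁
  set y' : {i // i ∈ I₁} → ℚ := fun i =>
    if h : (i : Fin p) ∈ I₁.erase j then y ⟨i, h⟩ else -S / lam j with hy'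
  set F : Fin p → ℚ := fun i =>
    lam i * (if h : i ∈ I₁.erase j then y ⟨i, h⟩ else -S / lam j) with hF
  have hsum : ∑ i : {i // i ∈ I₁}, lam i * y' i = 0 := by
    have h1 : ∑ i : {i // i ∈ I₁}, lam i * y' i = ∑ i ∈ I₁, F i := by
      rw [← Finset.sum_coe_sort I₁ F]
    have h2 : ∑ i ∈ I₁, F i = F j + ∑ i ∈ I₁.erase j, F i :=
      (Finset.add_sum_erase I₁ F hjI₁).symm
    have h3 : F j = -S := by
      simp only [hF, Finset.notMem_erase, dif_neg, not_false_iff]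
      field_simp
    have h4 : ∑ i ∈ I₁.erase j, F i = S := by
      rw [hS, ← Finset.sum_coe_sort (I₁.erase j)
        (fun i => lam i * (if h : i ∈ I₁.erase j then y ⟨i, h⟩ else -S / lam j))]
      apply Finset.sum_congr rfl
      intro i _
      simp [hF, i.2]
    rw [h1, h2, h3, h4]; ring
  have hmem : y' ∈ Set.range (rowsub A I₁).mulVec := by
    rw [hI₁]; exact hsum
  obtain ⟨x, hx⟩ := hmem
  refine ⟨x, ?_⟩
  funext i
  have hiI₁ : (i : Fin p) ∈ I₁ := Finset.mem_of_mem_erase i.2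
  have key : (rowsub A (I₁.erase j)).mulVec x i
      = (rowsub A I₁).mulVec x ⟨(i : Fin p), hiI₁⟩ := rfl
  rw [key, hx]
  simp only [hy']
  rw [dif_pos i.2]
end

section
/- Let I ⊆ {1,…,p} be minimal such that (δ,ε) ∈ ω_I and dim ω_I = 1 (so that the rows A_I satisfy a relation Σ_{i∈I} λ_i A_i = 0 with all λ_i ≠ 0). Set I₊ = {i ∈ I | λ_i > 0} and I₋ = {i ∈ I | λ_i < 0}. Then (δ,ε) ∈ ω_∅ (i.e., there is x with Ax > D(δ,ε) strictly in all coordinates) if and only if both I₊ and I₋ are nonempty. -/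
/-- Let `I` be (minimal) such that `(δ,ε) ∈ ω_I`, `Im A_I` has codimension 1,
each `A_{I∖{i}}` is surjective, and the rows of `A_I` satisfy a relation
`∑_{i∈I} λ_i A_i = 0` with all `λ_i ≠ 0`.  Then `(δ,ε) ∈ ω_∅` if and only if both
`I₊ = {i ∈ I | λ_i > 0}` and `I₋ = {i ∈ I | λ_i < 0}` are nonempty. -/
theorem stmt_13 (p n : ℕ) (A : Matrix (Fin p) (Fin n) ℚ) (B B' C : Fin p → ℚ)
    (I : Finset (Fin p)) (δ ε : ℚ)
    (hmem : (δ, ε) ∈ smallOmega A B B' C (I : Set (Fin p)))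
    (hcodim : (rowsub A I).rank + 1 = I.card)
    (hsurj : ∀ i ∈ I, Function.Surjective (rowsub A (I.erase i)).mulVec)
    (lam : Fin p → ℚ)
    (hrel : ∀ k : Fin n, ∑ i ∈ I, lam i * A i k = 0)
    (hlam : ∀ i ∈ I, lam i ≠ 0) :
    (δ, ε) ∈ smallOmega A B B' C (∅ : Set (Fin p)) ↔
      ((I.filter fun i => 0 < lam i).Nonempty ∧ (I.filter fun i => lam i < 0).Nonempty) := by
  obtain ⟨x₀, heq, hlt⟩ := hmem
  have hIne : I.Nonempty := by rw [← Finset.card_pos]; omega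
  -- key: λ relation applied to any vector
  have key : ∀ w : Fin n → ℚ, ∑ i ∈ I, lam i * A.mulVec w i = 0 := by
    intro w
    have : ∑ i ∈ I, lam i * A.mulVec w i = ∑ k, (∑ i ∈ I, lam i * A i k) * w k := by
      simp only [Matrix.mulVec, dotProduct, Finset.mul_sum, Finset.sum_mul]
      rw [Finset.sum_comm]
      exact Finset.sum_congr rfl fun i _ => Finset.sum_congr rfl fun k _ => by ring
    simp [this, hrel]
  constructor
  · rintro ⟨x, -, hx⟩
    have hdiff : ∀ i ∈ I, 0 < A.mulVec x i - A.mulVec x₀ i := by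
      intro i hi
      have h1 := hx i (by simp)
      have h2 := heq i hi
      linarith
    have hsum : ∑ i ∈ I, lam i * (A.mulVec x i - A.mulVec x₀ i) = 0 := by
      simp only [mul_sub, Finset.sum_sub_distrib, key x, key x₀, sub_zero]
    constructor
    · by_contra h
      have hneg : ∀ i ∈ I, lam i * (A.mulVec x i - A.mulVec x₀ i) < 0 := by
        intro i hi
        have h1 : ¬ (0 < lam i) := fun hp => h ⟨i, Finset.mem_filter.mpr ⟨hi, hp⟩⟩
        have h2 : lam i < 0 := lt_of_le_of_ne (not_lt.mp h1) (hlam i hi)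
        exact mul_neg_of_neg_of_pos h2 (hdiff i hi)
      have := Finset.sum_pos (f := fun i => -(lam i * (A.mulVec x i - A.mulVec x₀ i)))
        (fun i hi => by simpa using hneg i hi) hIne
      rw [Finset.sum_neg_distrib] at this
      linarith
    · by_contra h
      have hpos : ∀ i ∈ I, 0 < lam i * (A.mulVec x i - A.mulVec x₀ i) := by
        intro i hi
        have h1 : ¬ (lam i < 0) := fun hp => h ⟨i, Finset.mem_filter.mpr ⟨hi, hp⟩⟩
        have h2 : 0 < lam i := lt_of_le_of_ne (not_lt.mp h1) (Ne.symm (hlam i hi))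
        exact mul_pos h2 (hdiff i hi)
      have := Finset.sum_pos hpos hIne
      linarith
  · rintro ⟨hPne, hNne⟩
    set P : ℚ := ∑ i ∈ I.filter (fun i => 0 < lam i), lam i with hPdef
    set N : ℚ := -∑ i ∈ I.filter (fun i => lam i < 0), lam i with hNdef
    have hP : 0 < P := Finset.sum_pos (fun i hi => (Finset.mem_filter.mp hi).2) hPne
    have hN : 0 < N := by
      rw [hNdef, neg_pos]
      have := Finset.sum_pos (f := fun i => -lam i)
        (fun i hi => by simpa using (Finset.mem_filter.mp hi).2) hNne
      rw [Finset.sum_neg_distrib] at this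
      linarith
    -- the positive kernel vector
    set v : {i // i ∈ I} → ℚ := fun i => if 0 < lam i then N else P with hvdef
    have hvpos : ∀ i : {i // i ∈ I}, 0 < v i := by
      intro i; rw [hvdef]; dsimp only; split <;> assumption
    have hlv : ∑ i ∈ I, lam i * (if 0 < lam i then N else P) = 0 := by
      rw [← Finset.sum_filter_add_sum_filter_not I (fun i => 0 < lam i)]
      have h1 : ∑ i ∈ I.filter (fun i => 0 < lam i), lam i * (if 0 < lam i then N else P)
          = P * N := by
        rw [Finset.sum_congr rfl (fun i hi => by
          rw [if_pos (Finset.mem_filter.mp hi).2]), ← Finset.sum_mul]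
      have h2 : ∑ i ∈ I.filter (fun i => ¬ 0 < lam i), lam i * (if 0 < lam i then N else P)
          = -(N * P) := by
        have hfe : I.filter (fun i => ¬ 0 < lam i) = I.filter (fun i => lam i < 0) := by
          apply Finset.filter_congr
          intro i hi
          simp only [not_lt]
          constructor
          · intro h; exact lt_of_le_of_ne h (hlam i hi)
          · intro h; exact le_of_lt h
        rw [hfe, Finset.sum_congr rfl (fun i hi => by
          rw [if_neg (not_lt.mpr (le_of_lt (Finset.mem_filter.mp hi).2))]), ← Finset.sum_mul]
        rw [hNdef]; ring
      rw [h1, h2]; ring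
    -- linear functional
    let l : ({i // i ∈ I} → ℚ) →ₗ[ℚ] ℚ :=
      { toFun := fun u => ∑ i : {i // i ∈ I}, lam i * u i
        map_add' := by intro a b; simp [mul_add, Finset.sum_add_distrib]
        map_smul' := by
          intro c a
          simp only [Pi.smul_apply, smul_eq_mul, RingHom.id_apply, Finset.mul_sum]
          exact Finset.sum_congr rfl fun i _ => by ring }
    have hlapp : ∀ u : {i // i ∈ I} → ℚ, l u = ∑ i : {i // i ∈ I}, lam i * u i := fun _ => rfl
    have hlne : l ≠ 0 := by
      obtain ⟨i₀, hi₀⟩ := hIne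
      intro h
      have h1 : l (Pi.single ⟨i₀, hi₀⟩ 1) = lam i₀ := by
        rw [hlapp]
        rw [Fintype.sum_eq_single (⟨i₀, hi₀⟩ : {i // i ∈ I})]
        · simp
        · intro j hj
          rw [Pi.single_eq_of_ne hj]; ring
      rw [h] at h1
      exact hlam i₀ hi₀ (by simpa using h1.symm)
    have hkerrank : Module.finrank ℚ (LinearMap.ker l) + 1 = I.card := by
      rw [Module.Dual.finrank_ker_add_one_of_ne_zero hlne]
      simp [Module.finrank_pi]
    have hle : LinearMap.range (rowsub A I).mulVecLin ≤ LinearMap.ker l := by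
      rintro u ⟨y, rfl⟩
      rw [LinearMap.mem_ker, hlapp]
      have : ∑ i : {i // i ∈ I}, lam i * (rowsub A I).mulVecLin y i
          = ∑ i ∈ I, lam i * A.mulVec y i := by
        rw [← Finset.sum_coe_sort I (fun i => lam i * A.mulVec y i)]
        exact Finset.sum_congr rfl fun i _ => rfl
      rw [this, key]
    have hrange : LinearMap.range (rowsub A I).mulVecLin = LinearMap.ker l := by
      apply Submodule.eq_of_le_of_finrank_eq hle
      have : Module.finrank ℚ (LinearMap.range (rowsub A I).mulVecLin) = (rowsub A I).rank := rfl
      omega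
    have hvker : v ∈ LinearMap.ker l := by
      rw [LinearMap.mem_ker, hlapp]
      rw [← Finset.sum_coe_sort I (fun i => lam i * (if 0 < lam i then N else P))] at hlv
      exact hlv
    rw [← hrange] at hvker
    obtain ⟨y, hy⟩ := hvker
    -- choose scaling parameter t
    have hpne : (Finset.univ : Finset (Fin p)).Nonempty := ⟨hIne.choose, Finset.mem_univ _⟩
    set c : Fin p → ℚ := fun j =>
      if j ∈ I then 1 else (A.mulVec x₀ j - Dvec B B' C (δ, ε) j) / (1 + |A.mulVec y j|)
      with hcdef
    have hcpos : ∀ j, 0 < c j := by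
      intro j
      rw [hcdef]; dsimp only
      split
      · norm_num
      · next hj =>
        have hgap : 0 < A.mulVec x₀ j - Dvec B B' C (δ, ε) j := by
          have := hlt j (by simpa using hj)
          linarith
        have hden : (0:ℚ) < 1 + |A.mulVec y j| := by positivity
        positivity
    set t : ℚ := Finset.univ.inf' hpne c with htdef
    have ht : 0 < t := by
      rw [htdef, Finset.lt_inf'_iff]
      exact fun j _ => hcpos j
    refine ⟨fun k => x₀ k + t * y k, fun i hi => absurd hi (by simp), ?_⟩
    intro j _
    have hmv : A.mulVec (fun k => x₀ k + t * y k) j = A.mulVec x₀ j + t * A.mulVec y j := by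
      simp only [Matrix.mulVec, dotProduct, mul_add, Finset.sum_add_distrib]
      congr 1
      rw [Finset.mul_sum]
      exact Finset.sum_congr rfl fun k _ => by ring
    rw [hmv]
    by_cases hj : j ∈ I
    · have h1 : A.mulVec y j = v ⟨j, hj⟩ := by
        have := congrFun hy ⟨j, hj⟩
        simpa [rowsub, Matrix.mulVecLin_apply, Matrix.mulVec, Matrix.submatrix,
          dotProduct] using this
      have h2 := heq j (by simpa using hj)
      have h3 := hvpos ⟨j, hj⟩
      rw [h1]
      nlinarith
    · have htc : t ≤ c j := by
        rw [htdef]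
        exact Finset.inf'_le c (Finset.mem_univ j)
      have hgap : 0 < A.mulVec x₀ j - Dvec B B' C (δ, ε) j := by
        have := hlt j (by simpa using hj)
        linarith
      have hcj : c j = (A.mulVec x₀ j - Dvec B B' C (δ, ε) j) / (1 + |A.mulVec y j|) := by
        rw [hcdef]; simp [hj]
      have hden : (0:ℚ) < 1 + |A.mulVec y j| := by positivity
      have habs : -(|A.mulVec y j|) ≤ A.mulVec y j := neg_abs_le _
      have h5 : t * |A.mulVec y j| ≤ c j * |A.mulVec y j| :=
        mul_le_mul_of_nonneg_right htc (abs_nonneg _)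
      have h6 : c j * (1 + |A.mulVec y j|) = A.mulVec x₀ j - Dvec B B' C (δ, ε) j := by
        rw [hcj]; field_simp
      nlinarith [abs_nonneg (A.mulVec y j), mul_le_mul_of_nonneg_left habs (le_of_lt ht)]
end

section
/- Let I ⊆ {1,…,p} with a relation Σ_{i∈I} λ_i A_i = 0 where I₊ and I₋ (the indices with λ_i > 0 resp. λ_i < 0) are both nonempty, and such that A_{I∖{i}} is surjective for every i ∈ I. Then there exists y ∈ ℚⁿ with A_i y > 0 for every i ∈ I. -/
/-- If the rows indexed by `I` satisfy a relation `∑_{i∈I} λ_i A_i = 0` with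
all `λ_i ≠ 0`, both `I₊` and `I₋` nonempty, and `A_{I∖{i}}` is surjective for every `i ∈ I`,
then there exists `y` with `A_i y > 0` for every `i ∈ I`. -/
theorem stmt_17 (p n : ℕ) (A : Matrix (Fin p) (Fin n) ℚ) (I : Finset (Fin p))
    (lam : Fin p → ℚ)
    (hrel : ∀ k : Fin n, ∑ i ∈ I, lam i * A i k = 0)
    (hlam : ∀ i ∈ I, lam i ≠ 0)
    (hplus : (I.filter fun i => 0 < lam i).Nonempty)
    (hminus : (I.filter fun i => lam i < 0).Nonempty)
    (hsurj : ∀ i ∈ I, Function.Surjective (rowsub A (I.erase i)).mulVec) :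
    ∃ y : Fin n → ℚ, ∀ i ∈ I, 0 < A.mulVec y i := by
  obtain ⟨i₀, hi₀⟩ := hplus
  rw [Finset.mem_filter] at hi₀
  obtain ⟨hi₀I, hi₀pos⟩ := hi₀
  obtain ⟨j, hj⟩ := hminus
  rw [Finset.mem_filter] at hj
  obtain ⟨hjI, hjneg⟩ := hj
  have hji₀ : j ≠ i₀ := fun h => by subst h; linarith
  have hjmem : j ∈ I.erase i₀ := Finset.mem_erase.mpr ⟨hji₀, hjI⟩
  set S : ℚ := ∑ i ∈ (I.erase i₀).erase j, lam i with hS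
  set M : ℚ := (|S| + 1) / (-lam j) with hM
  have hMpos : 0 < M := div_pos (by positivity) (by linarith)
  set c : {i // i ∈ I.erase i₀} → ℚ := fun i => if (i : Fin p) = j then M else 1 with hc
  obtain ⟨y, hy⟩ := hsurj i₀ hi₀I c
  have hval : ∀ i (h : i ∈ I.erase i₀), A.mulVec y i = c ⟨i, h⟩ := by
    intro i h
    have := congrFun hy ⟨i, h⟩
    simpa [rowsub, Matrix.mulVec, Matrix.submatrix, dotProduct] using this
  have htot : ∑ i ∈ I, lam i * A.mulVec y i = 0 := by
    have h1 : ∑ i ∈ I, lam i * A.mulVec y i = ∑ k, (∑ i ∈ I, lam i * A i k) * y k := by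
      simp only [Matrix.mulVec, dotProduct, Finset.mul_sum, Finset.sum_mul]
      rw [Finset.sum_comm]
      apply Finset.sum_congr rfl
      intro i _
      apply Finset.sum_congr rfl
      intro k _
      ring
    rw [h1]
    simp [hrel]
  have hsplit : ∑ i ∈ I, lam i * A.mulVec y i =
      lam i₀ * A.mulVec y i₀ + ∑ i ∈ I.erase i₀, lam i * A.mulVec y i :=
    (Finset.add_sum_erase I _ hi₀I).symm
  have hsum2 : ∑ i ∈ I.erase i₀, lam i * A.mulVec y i = lam j * M + S := by
    rw [← Finset.add_sum_erase _ _ hjmem]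
    congr 1
    · rw [hval j hjmem]; simp [hc]
    · rw [hS]
      apply Finset.sum_congr rfl
      intro i hi
      have hi' := Finset.mem_of_mem_erase hi
      have hij : i ≠ j := (Finset.mem_erase.mp hi).1
      rw [hval i hi']
      simp [hc, hij]
  have hlamj : lam j ≠ 0 := ne_of_lt hjneg
  have hlamjM : lam j * M = -(|S| + 1) := by
    rw [hM, div_neg, mul_neg, mul_div_assoc', mul_comm, mul_div_assoc, div_self hlamj, mul_one]
  have hneg : ∑ i ∈ I.erase i₀, lam i * A.mulVec y i < 0 := by
    rw [hsum2, hlamjM]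
    have h2 := le_abs_self S
    linarith
  rw [hsplit] at htot
  have hA0 : 0 < lam i₀ * A.mulVec y i₀ := by linarith
  refine ⟨y, ?_⟩
  intro i hiI
  by_cases h : i = i₀
  · subst h
    rcases mul_pos_iff.mp hA0 with ⟨_, h2⟩ | ⟨h1, _⟩
    · exact h2
    · linarith
  · have hmem : i ∈ I.erase i₀ := Finset.mem_erase.mpr ⟨h, hiI⟩
    rw [hval i hmem]
    by_cases hij : i = j
    · simp [hc, hij, hMpos]
    · simp [hc, hij]
end
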